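/- Fix α > 1/2 and define M_α(p) = ⌊√p / (log p)^α⌋. For all sufficiently large X, the number of primes p ≤ X that are not M_α(p)-regular is at most 10 · X / (log X)^{2α}; that is, the constant C_α = 10 works for every α > 1/2. -/

import Mathlib

/-!
By von Staudt–Clausen the denominator of `B_{2k}` divides the primorial of `2k + 1`, so it is
below `4^(2k+1)`, while `ζ(2k) ≤ 2` gives `|B_{2k}| ≤ (2k)!`. Hence `|num B_{2k}| ≤ (4k² + 1)^(4k+1)`
and at most `4k + 1` primes larger than `4k²` divide it. If `p ≤ X` is not `M_α(p)`-regular, then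
`p ∣ num B_{2k}` for some `2k ≤ M_α(p) < √p`, so `p > 4k²`; and since `u ↦ u/2 - α log u` is convex,
`√x / (log x)^α = exp (log x / 2 - α log log x)` is bounded on `[e, X]` by its value at `X` once that
value is at least `√e`, giving `k ≤ K := ⌊√X / (2 (log X)^α)⌋`. Summing over `k ≤ K` leaves at most
`5K² ≤ (5/4) X / (log X)^{2α}` such primes.
-/

open Real

/-- A prime `p` is `m`-regular if `p ∤ num(B_{2k})` for all even `2 ≤ 2k ≤ min(m, p-3)`. -/
def IsMRegular (m p : ℕ) : Prop :=
  ∀ k : ℕ, 2 ≤ 2 * k → 2 * k ≤ min m (p - 3) → ¬ ((p : ℤ) ∣ (bernoulli (2 * k)).num)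

noncomputable def Mfloor (α : ℝ) (p : ℕ) : ℕ := ⌊Real.sqrt p / Real.log p ^ α⌋₊

open Finset

theorem Nat.pow_card_primeFactors_filter_lt_le {N B : ℕ} (hN : N ≠ 0) :
    (B + 1) ^ #{p ∈ N.primeFactors | B < p} ≤ N :=
  calc (B + 1) ^ #{p ∈ N.primeFactors | B < p} ≤ ∏ p ∈ N.primeFactors with B < p, p :=
        pow_card_le_prod _ _ _ fun _ hp => (mem_filter.mp hp).2
    _ ≤ ∏ p ∈ N.primeFactors, p := prod_le_prod_of_subset_of_one_le' (filter_subset _ _)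
        fun _ hp _ => (Nat.prime_of_mem_primeFactors hp).one_lt.le
    _ ≤ N := Nat.le_of_dvd (Nat.pos_of_ne_zero hN) (Nat.prod_primeFactors_dvd N)

theorem Rat.natAbs_num_eq_abs_mul_den (q : ℚ) : (q.num.natAbs : ℚ) = |q| * q.den := by
  rw [Nat.cast_natAbs, Int.cast_abs, ← Rat.mul_den_eq_num, abs_mul, Nat.abs_cast]

theorem bernoulli_two_mul_den_dvd_primorial (k : ℕ) :
    (bernoulli (2 * k)).den ∣ primorial (2 * k + 1) := by
  obtain ⟨m, hm⟩ := Bernoulli.vonStaudt_clausen k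
  rw [eq_sub_of_add_eq hm.symm, Rat.intCast_sub_den]
  refine (Rat.den_sum_dvd_prod_den _ _).trans ?_
  calc ∏ p ∈ range (2 * k + 2) with p.Prime ∧ (p - 1) ∣ 2 * k, ((1 : ℚ) / p).den
      = ∏ p ∈ range (2 * k + 2) with p.Prime ∧ (p - 1) ∣ 2 * k, p :=
        prod_congr rfl fun p hp => by simp [(mem_filter.mp hp).2.1.ne_zero]
    _ ∣ primorial (2 * k + 1) :=
        prod_dvd_prod_of_subset _ _ _ fun p hp => by
          simp only [mem_filter] at hp ⊢
          exact ⟨hp.1, hp.2.1⟩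

/-- The quantity is `|ζ(2k)|`, by Euler's formula. -/
theorem abs_bernoulli_two_mul_mem_Icc {k : ℕ} (hk : k ≠ 0) :
    2 ^ (2 * k - 1) * π ^ (2 * k) * |(bernoulli (2 * k) : ℝ)| / (2 * k).factorial ∈
      Set.Icc 1 2 := by
  have hζ := hasSum_zeta_nat hk
  have h1 := le_hasSum hζ 1 fun n _ => by positivity
  have h2 := hasSum_le (fun n => ?_) hζ hasSum_zeta_two
  · have hπ : π ^ 2 / 6 ≤ 2 := by nlinarith [pi_lt_d2, pi_pos]
    have habs : |(-1) ^ (k + 1) * 2 ^ (2 * k - 1) * π ^ (2 * k) * (bernoulli (2 * k) : ℝ) /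
        (2 * k).factorial| =
          2 ^ (2 * k - 1) * π ^ (2 * k) * |(bernoulli (2 * k) : ℝ)| / (2 * k).factorial := by
      simp [abs_div, abs_mul, abs_of_pos pi_pos]
    rw [← habs, Set.mem_Icc, le_abs, abs_le]
    norm_num at h1
    exact ⟨Or.inl h1, by linarith, by linarith⟩
  · rcases Nat.eq_zero_or_pos n with rfl | hn
    · simp [hk]
    · exact one_div_le_one_div_of_le (by positivity)
        (pow_le_pow_right₀ (by exact_mod_cast hn) (by omega))

theorem bernoulli_two_mul_ne_zero {k : ℕ} (hk : k ≠ 0) : bernoulli (2 * k) ≠ 0 := by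
  intro h
  have := (abs_bernoulli_two_mul_mem_Icc hk).1
  norm_num [h] at this

theorem abs_bernoulli_two_mul_le_factorial {k : ℕ} (hk : k ≠ 0) :
    |bernoulli (2 * k)| ≤ (2 * k).factorial := by
  have hle := (abs_bernoulli_two_mul_mem_Icc hk).2
  have h2 : (2 : ℝ) ≤ 2 ^ (2 * k - 1) * π ^ (2 * k) := by
    have : (2 : ℝ) ≤ 2 ^ (2 * k - 1) := le_self_pow₀ one_le_two (by omega)
    nlinarith [one_le_pow₀ (n := 2 * k) (by linarith [pi_gt_three] : (1 : ℝ) ≤ π)]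
  rw [div_le_iff₀ (by positivity)] at hle
  exact_mod_cast (show (|bernoulli (2 * k)| : ℝ) ≤ (2 * k).factorial by
    nlinarith [abs_nonneg (bernoulli (2 * k) : ℝ)])

theorem natAbs_num_bernoulli_two_mul_le {k : ℕ} (hk : k ≠ 0) :
    (bernoulli (2 * k)).num.natAbs ≤ (2 * k).factorial * 4 ^ (2 * k + 1) := by
  have hden : (bernoulli (2 * k)).den ≤ 4 ^ (2 * k + 1) :=
    (Nat.le_of_dvd (primorial_pos _) (bernoulli_two_mul_den_dvd_primorial k)).trans
      (primorial_lt_four_pow _ (by omega)).le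
  exact_mod_cast (show ((bernoulli (2 * k)).num.natAbs : ℚ) ≤
      (2 * k).factorial * 4 ^ (2 * k + 1) by
    rw [Rat.natAbs_num_eq_abs_mul_den]
    exact mul_le_mul (abs_bernoulli_two_mul_le_factorial hk) (by exact_mod_cast hden)
      (by positivity) (by positivity))

theorem card_primeFactors_num_bernoulli_gt_le {k : ℕ} (hk : k ≠ 0) :
    #{p ∈ (bernoulli (2 * k)).num.natAbs.primeFactors | 4 * k ^ 2 < p} ≤ 4 * k + 1 := by
  have hk1 := Nat.one_le_iff_ne_zero.mpr hk
  have hN : (bernoulli (2 * k)).num.natAbs ≠ 0 := by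
    simpa using bernoulli_two_mul_ne_zero hk
  refine (Nat.pow_le_pow_iff_right (by nlinarith : 2 ≤ 4 * k ^ 2 + 1)).mp ?_
  calc (4 * k ^ 2 + 1) ^ _ ≤ (bernoulli (2 * k)).num.natAbs :=
        Nat.pow_card_primeFactors_filter_lt_le hN
    _ ≤ (2 * k).factorial * 4 ^ (2 * k + 1) := natAbs_num_bernoulli_two_mul_le hk
    _ ≤ (2 * k) ^ (2 * k) * 4 ^ (2 * k + 1) := Nat.mul_le_mul_right _ (Nat.factorial_le_pow _)
    _ ≤ (4 * k ^ 2 + 1) ^ (2 * k) * (4 * k ^ 2 + 1) ^ (2 * k + 1) := by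
        gcongr <;> nlinarith
    _ = (4 * k ^ 2 + 1) ^ (4 * k + 1) := by rw [← pow_add]; ring_nf

theorem convexOn_half_sub_mul_log {α : ℝ} (hα : 0 ≤ α) :
    ConvexOn ℝ (Set.Ioi 0) (fun u => u / 2 - α * log u) :=
  ((convexOn_id (convex_Ioi 0)).smul (by norm_num : (0 : ℝ) ≤ 1 / 2)).sub
    (strictConcaveOn_log_Ioi.concaveOn.smul hα) |>.congr fun u _ => by simp; ring

theorem sqrt_div_log_rpow_eq_exp {x : ℝ} (hx : 1 < x) (α : ℝ) :
    √x / log x ^ α = exp (log x / 2 - α * log (log x)) := by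
  rw [sqrt_eq_rpow, rpow_def_of_pos (by linarith), rpow_def_of_pos (log_pos hx), exp_sub]
  ring_nf

theorem eventually_half_le_half_sub_mul_log (α : ℝ) :
    ∀ᶠ u in Filter.atTop, 1 / 2 ≤ u / 2 - α * log u := by
  filter_upwards [isLittleO_log_id_atTop.bound (show (0 : ℝ) < 1 / (4 * (|α| + 1)) by positivity),
    Filter.eventually_ge_atTop 2] with u hlog hu
  simp only [norm_eq_abs, id, abs_of_pos (by linarith : (0 : ℝ) < u)] at hlog
  have hαlog : α * log u ≤ |α| * |log u| := by rw [← abs_mul]; exact le_abs_self _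
  have : |α| * |log u| ≤ u / 4 :=
    calc |α| * |log u| ≤ |α| * (1 / (4 * (|α| + 1)) * u) := by gcongr
      _ = u / 4 * (|α| / (|α| + 1)) := by field_simp
      _ ≤ u / 4 := mul_le_of_le_one_right (by linarith)
          ((div_le_one (by positivity)).mpr (by linarith))
  linarith

/-- The convex function `u/2 - α log u` attains its maximum on `[1, log y]` at an endpoint, and
`hy` says that endpoint is `log y`. -/
theorem sqrt_div_log_rpow_le_of_le {α x y : ℝ} (hα : 0 ≤ α) (hx : exp 1 ≤ x) (hxy : x ≤ y)
    (hy : 1 / 2 ≤ log y / 2 - α * log (log y)) : √x / log x ^ α ≤ √y / log y ^ α := by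
  have hx1 : 1 < x := (one_lt_exp_iff.mpr one_pos).trans_le hx
  have hlx : 1 ≤ log x := (le_log_iff_exp_le (by linarith)).mpr hx
  have hlxy : log x ≤ log y := log_le_log (by linarith) hxy
  rw [sqrt_div_log_rpow_eq_exp hx1, sqrt_div_log_rpow_eq_exp (hx1.trans_le hxy), exp_le_exp]
  have hmax := (convexOn_half_sub_mul_log hα).le_max_of_mem_Icc (x := 1) (y := log y)
    (by norm_num) (show 0 < log y by linarith) ⟨hlx, hlxy⟩
  simp only [log_one, mul_zero, sub_zero] at hmax
  exact hmax.trans (max_le hy le_rfl)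

theorem Mfloor_le (α : ℝ) (p : ℕ) : (Mfloor α p : ℝ) ≤ √p / log p ^ α :=
  Nat.floor_le (div_nonneg (sqrt_nonneg _) (rpow_nonneg (log_natCast_nonneg p) _))

theorem sq_lt_of_two_mul_le_Mfloor {α : ℝ} {k p : ℕ} (hα : 0 < α) (hp : 3 ≤ p)
    (h : 2 * k ≤ Mfloor α p) : (2 * k) ^ 2 < p := by
  have hlog : 1 < log p := by
    rw [lt_log_iff_exp_lt (by positivity)]
    have hp3 : (3 : ℝ) ≤ p := by exact_mod_cast hp
    exact exp_one_lt_d9.trans_le (by linarith)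
  have hlt : ((2 * k : ℕ) : ℝ) < √p :=
    calc ((2 * k : ℕ) : ℝ) ≤ √p / log p ^ α := (Nat.cast_le.mpr h).trans (Mfloor_le α p)
      _ < √p := div_lt_self (by positivity) (one_lt_rpow hlog hα)
  exact_mod_cast (lt_sqrt (by positivity)).mp hlt

open Classical in
theorem card_not_isMRegular_le {α X : ℝ} (hα : 0 < α)
    (hX : 1 / 2 ≤ log X / 2 - α * log (log X)) :
    #((range (⌊X⌋₊ + 1)).filter
        fun p : ℕ => p.Prime ∧ (p : ℝ) ≤ X ∧ ¬ IsMRegular (Mfloor α p) p) ≤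
      5 * ⌊√X / (2 * log X ^ α)⌋₊ ^ 2 := by
  set K := ⌊√X / (2 * log X ^ α)⌋₊
  set T : ℕ → Finset ℕ :=
    fun k => {p ∈ (bernoulli (2 * k)).num.natAbs.primeFactors | 4 * k ^ 2 < p}
  have hsub : (range (⌊X⌋₊ + 1)).filter
      (fun p : ℕ => p.Prime ∧ (p : ℝ) ≤ X ∧ ¬ IsMRegular (Mfloor α p) p) ⊆
        (Icc 1 K).biUnion T := by
    intro p hp
    obtain ⟨-, hprime, hpX, hirr⟩ := mem_filter.mp hp
    simp only [IsMRegular, le_min_iff, not_forall, not_not] at hirr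
    obtain ⟨k, hk1, ⟨hkM, hkp⟩, hdvd⟩ := hirr
    have hk : k ≠ 0 := by omega
    have hp : 3 ≤ p := by omega
    have hp3 : (3 : ℝ) ≤ p := by exact_mod_cast hp
    have hep : exp 1 ≤ p := exp_one_lt_d9.le.trans (by linarith)
    have hlX : 0 < log X := log_pos (by linarith)
    have h2k : (2 * k : ℝ) ≤ √X / log X ^ α :=
      calc (2 * k : ℝ) ≤ √p / log p ^ α := by
            exact_mod_cast (Nat.cast_le.mpr hkM).trans (Mfloor_le α p)
        _ ≤ √X / log X ^ α := sqrt_div_log_rpow_le_of_le hα.le hep hpX hX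
    refine mem_biUnion.mpr ⟨k, mem_Icc.mpr ⟨by omega, Nat.le_floor ?_⟩, mem_filter.mpr ⟨?_, ?_⟩⟩
    · rw [le_div_iff₀ (by positivity)] at h2k ⊢
      linarith
    · exact Nat.mem_primeFactors.mpr
        ⟨hprime, Int.natCast_dvd.mp hdvd, by simpa using bernoulli_two_mul_ne_zero hk⟩
    · have := sq_lt_of_two_mul_le_Mfloor hα hp hkM
      linarith
  calc _ ≤ #((Icc 1 K).biUnion T) := card_le_card hsub
    _ ≤ ∑ k ∈ Icc 1 K, #(T k) := card_biUnion_le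
    _ ≤ ∑ k ∈ Icc 1 K, 5 * K := sum_le_sum fun k hk => by
        have hk := mem_Icc.mp hk
        have : #(T k) ≤ 4 * k + 1 := card_primeFactors_num_bernoulli_gt_le (by omega)
        omega
    _ = 5 * K ^ 2 := by rw [sum_const, Nat.card_Icc, Nat.add_sub_cancel, smul_eq_mul]; ring

open Classical in
theorem stmt_15 (α : ℝ) (hα : 1 / 2 < α) :
    ∃ X₀ : ℝ, ∀ X : ℝ, X₀ ≤ X →
      (((Finset.range (⌊X⌋₊ + 1)).filter
          (fun p : ℕ => p.Prime ∧ (p : ℝ) ≤ X ∧ ¬ IsMRegular (Mfloor α p) p)).card : ℝ) ≤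
        10 * X / Real.log X ^ (2 * α) := by
  obtain ⟨X₀, hX₀⟩ := Filter.eventually_atTop.mp <|
    (tendsto_log_atTop.eventually ((eventually_half_le_half_sub_mul_log α).and
      (Filter.eventually_gt_atTop 0))).and (Filter.eventually_ge_atTop 0)
  refine ⟨X₀, fun X hX => ?_⟩
  obtain ⟨⟨hgX, hlX⟩, hX0⟩ := hX₀ X hX
  have hK : (⌊√X / (2 * log X ^ α)⌋₊ : ℝ) ≤ √X / (2 * log X ^ α) :=
    Nat.floor_le (by positivity)
  calc _ ≤ ((5 * ⌊√X / (2 * log X ^ α)⌋₊ ^ 2 : ℕ) : ℝ) := by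
        exact_mod_cast card_not_isMRegular_le (by linarith) hgX
    _ ≤ 5 * (√X / (2 * log X ^ α)) ^ 2 := by push_cast; gcongr
    _ = 5 / 4 * (X / log X ^ (2 * α)) := by
        rw [div_pow, mul_pow, sq_sqrt hX0, ← rpow_natCast (log X ^ α), ← rpow_mul hlX.le]
        ring_nf
    _ ≤ 10 * X / log X ^ (2 * α) := by
        rw [mul_div_assoc]
        gcongr
        norm_num
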